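/- Let μ ∈ ℝ, N ∈ ℕ, and A > 0. There exists a constant C > 0, depending only on μ, N and A, such that for every real sequence (a_l)_{l≥0} with a_0 = 0 (extended by a_l = 0 for l < 0) satisfying |a_l| ≤ A l^μ for all l ≥ 1 and |(Δ⁻)^{k₁}(Δ⁺)^{k₂} a_l| ≤ A l^{μ − 2(k₁+k₂)} for all l ≥ 1 and all k₁, k₂ ∈ ℕ with k₁ + k₂ ≤ 2N, the iterated sequence satisfies |(P^N a)_l| ≤ C l^{μ − 2N} for all l ≥ 1, where P is the operator on sequences defined by (Pa)_l = (l/(2l+1))(a_{l−1} − 2a_l + a_{l+1}) + (1/(2l+1))(a_{l+1} − a_l). -/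

import Mathlib

/-! Write `Δ` for the forward difference and `w l = max l 1`, and call `f` a symbol of order `ν`
if `|Δᵏ f l| ≤ C w(l)^(ν - k)` for the first few `k`. For `l ≥ 0` one has
`P b = R · (Δ²b)(· - 1) + S · Δb`, where `R` and `S` are symbols of order `0` and `-1`, because
`Δᵏ S l = (-2)ᵏ k! / ∏_{j ≤ k} (2l + 2j + 1)` and `R = 1/2 - S/2`. By the discrete Leibniz rule
orders add under products, so `P` lowers the order by `2` at the cost of two differences. Since
`P b` vanishes at `-1`, the estimate on `l ≥ 0` extends to `l ≥ -1`, which is all that the next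
application of `P` looks at. The hypotheses make `a` a symbol of order `μ` on `l ≥ -1`: at `l = 0`
and `l = -1` the forward differences of `a` are backward differences at `l = 1`. The constants are
tracked uniformly over families of sequences, so in the end they do not depend on `a`. -/

open Real

/-- Forward difference operator `Δ⁺ a l = a (l+1) - a l`. -/
def dplus (a : ℤ → ℝ) : ℤ → ℝ := fun l => a (l + 1) - a l

/-- Backward difference operator `Δ⁻ a l = a l - a (l-1)`. -/
def dminus (a : ℤ → ℝ) : ℤ → ℝ := fun l => a l - a (l - 1)

/-- The operator `P` on sequences:
`(Pa)_l = (l/(2l+1))(a_{l-1} - 2a_l + a_{l+1}) + (1/(2l+1))(a_{l+1} - a_l)` for `l ≥ 0`,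
with the resulting sequence extended by `0` on negative indices. -/
noncomputable def Pop (a : ℤ → ℝ) : ℤ → ℝ := fun l =>
  if l < 0 then 0
  else ((l : ℝ) / (2 * (l : ℝ) + 1)) * (a (l - 1) - 2 * a l + a (l + 1))
    + (1 / (2 * (l : ℝ) + 1)) * (a (l + 1) - a l)

open Finset fwdDiff
open scoped Nat

-- `Δ_[h] ^[n]` needs the space: `]^` is a token of its own.

noncomputable def weight (l : ℤ) : ℝ := max (l : ℝ) 1

lemma one_le_weight (l : ℤ) : 1 ≤ weight l := le_max_right _ _

lemma weight_pos (l : ℤ) : 0 < weight l := one_pos.trans_le (one_le_weight l)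

lemma weight_rpow_pos (l : ℤ) (e : ℝ) : 0 < weight l ^ e := rpow_pos_of_pos (weight_pos l) e

lemma weight_of_le_one {l : ℤ} (h : l ≤ 1) : weight l = 1 :=
  max_eq_right (by exact_mod_cast h)

lemma weight_natCast {n : ℕ} (h : 1 ≤ n) : weight n = n :=
  max_eq_left (by exact_mod_cast h)

lemma weight_add_le (l d : ℤ) : weight (l + d) ≤ (|(d : ℝ)| + 1) * weight l := by
  have := le_abs_self (d : ℝ)
  have := abs_nonneg (d : ℝ)
  have := le_max_left (l : ℝ) 1
  have := le_max_right (l : ℝ) 1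
  unfold weight
  push_cast
  apply max_le <;> nlinarith

lemma rpow_le_rpow_abs_mul {x y c : ℝ} (hx : 0 < x) (hy : 0 < y) (hxy : x ≤ c * y)
    (hyx : y ≤ c * x) (e : ℝ) : x ^ e ≤ c ^ |e| * y ^ e := by
  have hc : 0 < c := pos_of_mul_pos_left (hy.trans_le hyx) hx.le
  rcases le_total 0 e with he | he
  · rw [abs_of_nonneg he, ← mul_rpow hc.le hy.le]
    exact rpow_le_rpow hx.le hxy he
  · calc x ^ e ≤ (y / c) ^ e := rpow_le_rpow_of_nonpos (by positivity) ((div_le_iff₀' hc).2 hyx) he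
      _ = c ^ |e| * y ^ e := by
        rw [div_rpow hy.le hc.le, abs_of_nonpos he, rpow_neg hc.le, div_eq_inv_mul]

lemma weight_add_rpow_le (l d : ℤ) (e : ℝ) :
    weight (l + d) ^ e ≤ (|(d : ℝ)| + 1) ^ |e| * weight l ^ e :=
  rpow_le_rpow_abs_mul (weight_pos _) (weight_pos _) (weight_add_le l d)
    (by simpa using weight_add_le (l + d) (-d)) e

lemma fwdDiff_iter_mul {M R : Type*} [AddCommMonoid M] [CommRing R] (h : M) (f g : M → R)
    (n : ℕ) (y : M) :
    Δ_[h] ^[n] (f * g) y = ∑ p ∈ antidiagonal n,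
      (n.choose p.1 : R) * (Δ_[h] ^[p.1] f y * Δ_[h] ^[p.2] g (y + p.1 • h)) := by
  induction n generalizing f g with
  | zero => simp
  | succ n ih =>
    have hstep : Δ_[h] (f * g) = Δ_[h] f * (fun m => g (m + h)) + f * Δ_[h] g := by
      ext m; simp only [fwdDiff, Pi.add_apply, Pi.mul_apply]; ring
    rw [Function.iterate_succ_apply, hstep, fwdDiff_iter_add, Pi.add_apply, ih, ih,
      sum_antidiagonal_choose_succ_mul (fun i j => Δ_[h] ^[i] f y * Δ_[h] ^[j] g (y + i • h)),
      add_comm]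
    congr 1
    refine sum_congr rfl fun p hp => ?_
    rw [Nat.choose_symm_of_eq_add (mem_antidiagonal.1 hp).symm, fwdDiff_iter_comp_add,
      ← Function.iterate_succ_apply, succ_nsmul, add_assoc]

lemma fwdDiff_iter_eq_zero {a : ℤ → ℝ} (h0 : ∀ l ≤ 0, a l = 0) {k : ℕ} {l : ℤ}
    (hl : l + k ≤ 0) : Δ_[1] ^[k] a l = 0 := by
  rw [fwdDiff_iter_eq_sum_shift]
  exact sum_eq_zero fun j hj => by rw [h0 _ (by simp at hj ⊢; omega), smul_zero]

lemma abs_fwdDiff_iter_sub_one_le (g : ℤ → ℝ) (l : ℤ) (k : ℕ) :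
    |Δ_[1] ^[k] g (l - 1)| ≤ |g (l - 1)| + ∑ i ∈ range k, |Δ_[1] ^[i] g l| := by
  induction k with
  | zero => simp
  | succ k ih =>
    rw [Function.iterate_succ_apply', fwdDiff, sub_add_cancel, sum_range_succ]
    linarith [abs_sub (Δ_[1] ^[k] g l) (Δ_[1] ^[k] g (l - 1))]

noncomputable def coeffR (l : ℤ) : ℝ := l / (2 * l + 1)

noncomputable def coeffS (l : ℤ) : ℝ := 1 / (2 * l + 1)

lemma fwdDiff_iter_coeffS (k : ℕ) (m : ℤ) :
    Δ_[1] ^[k] coeffS m = (-2) ^ k * k ! / ∏ j ∈ range (k + 1), (2 * (m : ℝ) + 2 * j + 1) := by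
  induction k generalizing m with
  | zero => simp [coeffS]
  | succ k ih =>
    have hne (m : ℤ) (n : ℕ) : ∏ j ∈ range n, (2 * (m : ℝ) + 2 * j + 1) ≠ 0 :=
      prod_ne_zero_iff.2 fun j _ => by exact_mod_cast (by omega : 2 * m + 2 * j + 1 ≠ 0)
    have hfirst : ∏ j ∈ range (k + 1 + 1), (2 * (m : ℝ) + 2 * j + 1) =
        (∏ j ∈ range (k + 1), (2 * ((m : ℝ) + 1) + 2 * j + 1)) * (2 * m + 1) := by
      rw [prod_range_succ']
      push_cast
      congr 1
      · exact prod_congr rfl fun j _ => by ring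
      · ring
    have hlast : ∏ j ∈ range (k + 1 + 1), (2 * (m : ℝ) + 2 * j + 1) =
        (∏ j ∈ range (k + 1), (2 * (m : ℝ) + 2 * j + 1)) * (2 * m + 2 * (k + 1) + 1) := by
      rw [prod_range_succ]; push_cast; ring
    rw [Function.iterate_succ_apply', fwdDiff, ih, ih, div_sub_div _ _ (hne _ _) (hne _ _),
      div_eq_div_iff (mul_ne_zero (hne _ _) (hne _ _)) (hne _ _), Nat.factorial_succ]
    push_cast
    linear_combination ((-2) ^ k * k ! * ∏ j ∈ range (k + 1), (2 * (m : ℝ) + 2 * j + 1)) * hfirst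
      - ((-2) ^ k * k ! * ∏ j ∈ range (k + 1), (2 * ((m : ℝ) + 1) + 2 * j + 1)) * hlast

lemma abs_fwdDiff_iter_coeffS_le (k : ℕ) {m : ℤ} (hm : 0 ≤ m) :
    |Δ_[1] ^[k] coeffS m| ≤ 2 ^ k * k ! * weight m ^ ((-1 : ℝ) - k) := by
  have hm' : (0 : ℝ) ≤ m := by exact_mod_cast hm
  have hprod : weight m ^ (k + 1) ≤ ∏ j ∈ range (k + 1), (2 * (m : ℝ) + 2 * j + 1) := by
    rw [pow_eq_prod_const]
    refine prod_le_prod (fun _ _ => (weight_pos m).le) fun j _ => ?_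
    have : (0 : ℝ) ≤ j := j.cast_nonneg
    exact max_le (by linarith) (by linarith)
  have hpos : 0 < weight m ^ (k + 1) := pow_pos (weight_pos m) _
  rw [fwdDiff_iter_coeffS, abs_div, abs_mul, abs_pow, abs_neg, abs_two, Nat.abs_cast,
    abs_of_pos (hpos.trans_le hprod), show (-1 : ℝ) - k = -((k + 1 : ℕ) : ℝ) by push_cast; ring,
    rpow_neg (weight_pos m).le, rpow_natCast, ← div_eq_mul_inv]
  gcongr

lemma coeffR_eq (m : ℤ) : coeffR m = 1 / 2 - coeffS m / 2 := by
  have h₀ : 2 * (m : ℝ) + 1 ≠ 0 := by exact_mod_cast (by omega : 2 * m + 1 ≠ 0)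
  rw [coeffR, coeffS, eq_sub_iff_add_eq, div_div, div_add_div _ _ h₀ (by positivity),
    div_eq_iff (by positivity)]
  ring

lemma fwdDiff_coeffR : Δ_[1] coeffR = (-(1 / 2) : ℝ) • Δ_[1] coeffS := by
  ext m
  simp only [fwdDiff, coeffR_eq, Pi.smul_apply, smul_eq_mul]
  ring

lemma Pop_eq_of_nonneg (b : ℤ → ℝ) {m : ℤ} (hm : 0 ≤ m) :
    Pop b m = coeffR m * Δ_[1] ^[2] b (m + -1) + coeffS m * Δ_[1] b m := by
  simp only [Pop, if_neg (not_lt.2 hm), coeffR, coeffS, Function.iterate_succ_apply',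
    Function.iterate_zero_apply, fwdDiff]
  ring_nf

def SymbolBound (l₀ : ℤ) (ν : ℝ) (K : ℕ) (C : ℝ) (f : ℤ → ℝ) : Prop :=
  ∀ k ≤ K, ∀ l ≥ l₀, |Δ_[1] ^[k] f l| ≤ C * weight l ^ (ν - k)

lemma symbolBound_coeffS (K : ℕ) : SymbolBound 0 (-1) K (2 ^ K * K !) coeffS := fun k hk m hm =>
  (abs_fwdDiff_iter_coeffS_le k hm).trans <| by
    gcongr
    exacts [(weight_rpow_pos m _).le, one_le_two]

lemma symbolBound_coeffR (K : ℕ) : SymbolBound 0 0 K (2 ^ K * K !) coeffR := by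
  intro k hk m hm
  have hm' : (0 : ℝ) ≤ m := by exact_mod_cast hm
  have hK : (1 : ℝ) ≤ 2 ^ K * K ! := one_le_mul_of_one_le_of_one_le (one_le_pow₀ one_le_two)
    (by exact_mod_cast K.factorial_pos)
  cases k with
  | zero =>
    rw [Function.iterate_zero_apply, coeffR, abs_div, abs_of_nonneg hm',
      abs_of_pos (by positivity), div_le_iff₀ (by positivity), Nat.cast_zero, sub_zero,
      rpow_zero, mul_one]
    nlinarith
  | succ k =>
    rw [Function.iterate_succ_apply, fwdDiff_coeffR, fwdDiff_iter_const_smul,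
      ← Function.iterate_succ_apply, Pi.smul_apply, smul_eq_mul, abs_mul]
    calc |-(1 / 2 : ℝ)| * |Δ_[1] ^[k + 1] coeffS m|
        ≤ 1 * (2 ^ K * K ! * weight m ^ ((-1 : ℝ) - (k + 1 : ℕ))) := by
          gcongr
          · norm_num
          · exact symbolBound_coeffS K (k + 1) hk m hm
      _ ≤ 2 ^ K * K ! * weight m ^ ((0 : ℝ) - (k + 1 : ℕ)) := by
          rw [one_mul]
          gcongr
          · exact one_le_weight m
          · linarith

namespace SymbolBound

variable {l₀ : ℤ} {ν α β : ℝ} {K : ℕ} {C F G : ℝ} {f g : ℤ → ℝ}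

lemma abs_fwdDiff_iter_add_le (hf : SymbolBound l₀ ν K C f) (hC : 0 ≤ C) {k : ℕ} (hk : k ≤ K)
    {l d : ℤ} (hl : l₀ ≤ l + d) :
    |Δ_[1] ^[k] f (l + d)| ≤ (|(d : ℝ)| + 1) ^ (|ν| + K) * C * weight l ^ (ν - k) :=
  calc |Δ_[1] ^[k] f (l + d)| ≤ C * weight (l + d) ^ (ν - k) := hf k hk _ hl
    _ ≤ C * ((|(d : ℝ)| + 1) ^ |ν - k| * weight l ^ (ν - k)) := by
      gcongr; exact weight_add_rpow_le l d _
    _ ≤ C * ((|(d : ℝ)| + 1) ^ (|ν| + K) * weight l ^ (ν - k)) := by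
      gcongr
      · exact (weight_rpow_pos l _).le
      · linarith [abs_nonneg (d : ℝ)]
      · calc |ν - k| ≤ |ν| + |(k : ℝ)| := abs_sub _ _
          _ ≤ |ν| + K := by rw [Nat.abs_cast]; gcongr
    _ = _ := by ring

lemma abs_fwdDiff_iter_mul_fwdDiff_iter_le (hf : SymbolBound l₀ α K F f)
    (hg : SymbolBound l₀ β K G g) (hF : 0 ≤ F) (hG : 0 ≤ G) {i j : ℕ} (hij : i + j ≤ K) {l : ℤ}
    (hl : l₀ ≤ l) :
    |Δ_[1] ^[i] f l * Δ_[1] ^[j] g (l + i)| ≤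
      (K + 1) ^ (|β| + K) * G * F * weight l ^ (α + β - (i + j : ℕ)) := by
  have hshift := hg.abs_fwdDiff_iter_add_le hG (k := j) (by omega) (l := l) (d := i) (by omega)
  rw [abs_mul]
  calc _ ≤ F * weight l ^ (α - i) * ((|((i : ℤ) : ℝ)| + 1) ^ (|β| + K) * G * weight l ^ (β - j)) :=
        mul_le_mul (hf i (by omega) l hl) hshift (abs_nonneg _)
          (mul_nonneg hF (weight_rpow_pos l _).le)
    _ ≤ F * weight l ^ (α - i) * ((K + 1) ^ (|β| + K) * G * weight l ^ (β - j)) := by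
        have := (weight_rpow_pos l (β - j)).le
        have := mul_nonneg hF (weight_rpow_pos l (α - i)).le
        gcongr
        rw [Int.cast_natCast, Nat.abs_cast]
        exact_mod_cast (by omega : i ≤ K)
    _ = (K + 1) ^ (|β| + K) * G * F * (weight l ^ (α - i) * weight l ^ (β - j)) := by ring
    _ = _ := by
        rw [← rpow_add (weight_pos l)]
        push_cast
        ring_nf

lemma mul (hf : SymbolBound l₀ α K F f) (hg : SymbolBound l₀ β K G g) (hF : 0 ≤ F)
    (hG : 0 ≤ G) : SymbolBound l₀ (α + β) K (2 ^ K * ((K + 1) ^ (|β| + K) * G * F)) (f * g) := by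
  intro k hk l hl
  have hchoose : ∑ p ∈ antidiagonal k, (k.choose p.1 : ℝ) = 2 ^ k := by
    rw [Nat.sum_antidiagonal_eq_sum_range_succ_mk]
    exact_mod_cast k.sum_range_choose
  rw [fwdDiff_iter_mul]
  calc _ ≤ ∑ p ∈ antidiagonal k,
        (k.choose p.1 : ℝ) * ((K + 1) ^ (|β| + K) * G * F * weight l ^ (α + β - k)) := by
        refine (abs_sum_le_sum_abs _ _).trans (sum_le_sum fun p hp => ?_)
        rw [HasAntidiagonal.mem_antidiagonal] at hp
        rw [abs_mul, Nat.abs_cast, nsmul_one, ← hp]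
        exact mul_le_mul_of_nonneg_left
          (hf.abs_fwdDiff_iter_mul_fwdDiff_iter_le hg hF hG (by omega) hl) (Nat.cast_nonneg _)
    _ = 2 ^ k * ((K + 1) ^ (|β| + K) * G * F * weight l ^ (α + β - k)) := by
        rw [← sum_mul, hchoose]
    _ ≤ 2 ^ K * ((K + 1) ^ (|β| + K) * G * F) * weight l ^ (α + β - k) := by
        rw [← mul_assoc]
        have := (weight_rpow_pos l (α + β - k)).le
        gcongr
        exact one_le_two

end SymbolBound

def UniformSymbolBound {ι : Type*} (l₀ : ℤ) (ν : ℝ) (K : ℕ) (f : ι → ℤ → ℝ) : Prop :=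
  ∃ C ≥ 0, ∀ i, SymbolBound l₀ ν K C (f i)

namespace UniformSymbolBound

variable {ι : Type*} {l₀ : ℤ} {ν α β : ℝ} {K : ℕ} {f g b : ι → ℤ → ℝ}

lemma mono {l₁ : ℤ} {K' : ℕ} (hf : UniformSymbolBound l₀ ν K f) (hl : l₀ ≤ l₁) (hK : K' ≤ K) :
    UniformSymbolBound l₁ ν K' f := by
  obtain ⟨C, hC, hf⟩ := hf
  exact ⟨C, hC, fun i k hk l hl' => hf i k (hk.trans hK) l (hl.trans hl')⟩

lemma congr (hf : UniformSymbolBound l₀ ν K f) (hfg : ∀ i, ∀ m ≥ l₀, f i m = g i m) :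
    UniformSymbolBound l₀ ν K g := by
  obtain ⟨C, hC, hf⟩ := hf
  refine ⟨C, hC, fun i k hk l hl => ?_⟩
  have : Δ_[1] ^[k] (g i) l = Δ_[1] ^[k] (f i) l := by
    simp only [fwdDiff_iter_eq_sum_shift]
    refine sum_congr rfl fun j _ => ?_
    rw [hfg i _ (by simp; omega)]
  exact this ▸ hf i k hk l hl

lemma add (hf : UniformSymbolBound l₀ ν K f) (hg : UniformSymbolBound l₀ ν K g) :
    UniformSymbolBound l₀ ν K (f + g) := by
  obtain ⟨F, hF, hf⟩ := hf
  obtain ⟨G, hG, hg⟩ := hg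
  refine ⟨F + G, by positivity, fun i k hk l hl => ?_⟩
  rw [Pi.add_apply, fwdDiff_iter_add, Pi.add_apply, add_mul]
  exact (abs_add_le _ _).trans (add_le_add (hf i k hk l hl) (hg i k hk l hl))

lemma mul (hf : UniformSymbolBound l₀ α K f) (hg : UniformSymbolBound l₀ β K g) :
    UniformSymbolBound l₀ (α + β) K (f * g) := by
  obtain ⟨F, hF, hf⟩ := hf
  obtain ⟨G, hG, hg⟩ := hg
  exact ⟨_, by positivity, fun i => (hf i).mul (hg i) hF hG⟩

lemma fwdDiff_iter (j : ℕ) (hf : UniformSymbolBound l₀ ν (K + j) f) :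
    UniformSymbolBound l₀ (ν - j) K (fun i => Δ_[1] ^[j] (f i)) := by
  obtain ⟨C, hC, hf⟩ := hf
  refine ⟨C, hC, fun i k hk l hl => ?_⟩
  rw [← Function.iterate_add_apply, sub_sub, ← Nat.cast_add, Nat.add_comm j]
  exact hf i (k + j) (by omega) l hl

lemma comp_add (d : ℤ) (hf : UniformSymbolBound l₀ ν K f) :
    UniformSymbolBound (l₀ - d) ν K (fun i m => f i (m + d)) := by
  obtain ⟨C, hC, hf⟩ := hf
  exact ⟨(|(d : ℝ)| + 1) ^ (|ν| + K) * C, by positivity, fun i k hk l hl => by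
    rw [fwdDiff_iter_comp_add]
    exact (hf i).abs_fwdDiff_iter_add_le hC hk (l := l) (d := d) (by omega)⟩

lemma extend_of_apply_neg_one_eq_zero (hf : UniformSymbolBound 0 ν K f)
    (h : ∀ i, f i (-1) = 0) : UniformSymbolBound (-1) ν K f := by
  obtain ⟨C, hC, hf⟩ := hf
  refine ⟨(K + 1) * C, by positivity, fun i k hk l hl => ?_⟩
  rcases (show l = -1 ∨ 0 ≤ l by omega) with rfl | hl
  · have hsum := abs_fwdDiff_iter_sub_one_le (f i) 0 k
    rw [zero_sub, h, abs_zero, zero_add] at hsum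
    rw [weight_of_le_one (by norm_num), one_rpow, mul_one]
    calc _ ≤ ∑ j ∈ range k, |Δ_[1] ^[j] (f i) 0| := hsum
      _ ≤ ∑ j ∈ range k, C := sum_le_sum fun j hj => by
          simpa [weight_of_le_one] using hf i j (by simp at hj; omega) 0 le_rfl
      _ ≤ (K + 1) * C := by
          rw [sum_const, card_range, nsmul_eq_mul]
          gcongr
          exact_mod_cast (by omega : k ≤ K + 1)
  · calc _ ≤ C * weight l ^ (ν - k) := hf i k hk l hl
      _ ≤ (K + 1) * C * weight l ^ (ν - k) := by
          have := (weight_rpow_pos l (ν - k)).le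
          gcongr
          exact le_mul_of_one_le_left hC (by linarith [(K.cast_nonneg : (0 : ℝ) ≤ K)])

lemma pop (hb : UniformSymbolBound (-1) ν (K + 2) b) :
    UniformSymbolBound (-1) (ν - 2) K (fun i => Pop (b i)) := by
  have hR : UniformSymbolBound 0 0 K (fun _ : ι => coeffR) :=
    ⟨_, by positivity, fun _ => symbolBound_coeffR K⟩
  have hS : UniformSymbolBound 0 (-1) K (fun _ : ι => coeffS) :=
    ⟨_, by positivity, fun _ => symbolBound_coeffS K⟩
  have hb₂ : UniformSymbolBound 0 (ν - 2) K (fun i m => Δ_[1] ^[2] (b i) (m + -1)) := by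
    simpa using (hb.fwdDiff_iter 2).comp_add (-1)
  have hb₁ : UniformSymbolBound 0 (ν - 1) K (fun i => Δ_[1] (b i)) := by
    simpa using ((hb.mono (by norm_num) (by omega : K + 1 ≤ K + 2)).fwdDiff_iter 1)
  have hR₂ := hR.mul hb₂
  have hS₁ := hS.mul hb₁
  rw [zero_add] at hR₂
  rw [show (-1 : ℝ) + (ν - 1) = ν - 2 by ring] at hS₁
  refine ((hR₂.add hS₁).congr fun i m hm => ?_).extend_of_apply_neg_one_eq_zero fun i => ?_
  · exact (Pop_eq_of_nonneg (b i) hm).symm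
  · simp [Pop]

lemma iterate_pop (n : ℕ) (hb : UniformSymbolBound (-1) ν (2 * n + K) b) :
    UniformSymbolBound (-1) (ν - 2 * n) K (fun i => Pop^[n] (b i)) := by
  induction n generalizing ν b with
  | zero => simpa using hb
  | succ n ih =>
    rw [show 2 * (n + 1) + K = 2 * n + K + 2 by ring] at hb
    rw [show ν - 2 * ((n + 1 : ℕ) : ℝ) = ν - 2 - 2 * n by push_cast; ring]
    exact ih hb.pop

end UniformSymbolBound

lemma dplus_eq_fwdDiff : dplus = Δ_[1] := rfl

lemma dminus_iterate_apply (k : ℕ) (f : ℤ → ℝ) (l : ℤ) :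
    dminus^[k] f l = Δ_[1] ^[k] f (l - k) := by
  induction k generalizing l with
  | zero => simp
  | succ k ih =>
    rw [Function.iterate_succ_apply', dminus, ih, ih, Function.iterate_succ_apply', fwdDiff]
    push_cast
    ring_nf

lemma symbolBound_of_abs_dminus_dplus_le {μ A : ℝ} {K : ℕ} (hA : 0 ≤ A) {a : ℤ → ℝ}
    (h0 : ∀ l : ℤ, l ≤ 0 → a l = 0)
    (h : ∀ k₁ k₂ : ℕ, k₁ + k₂ ≤ K → ∀ l : ℕ, 1 ≤ l →
      |(dminus^[k₁] (dplus^[k₂] a)) (l : ℤ)| ≤ A * (l : ℝ) ^ (μ - 2 * ((k₁ : ℝ) + k₂))) :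
    SymbolBound (-1) μ K A a := by
  intro k hk l hl
  rcases le_or_gt 1 l with hl1 | hl1
  · lift l to ℕ using (by omega)
    rw [weight_natCast (by exact_mod_cast hl1)]
    refine (h 0 k (by omega) l (by exact_mod_cast hl1)).trans ?_
    have : (1 : ℝ) ≤ l := by exact_mod_cast hl1
    gcongr
    push_cast
    linarith [(k.cast_nonneg : (0 : ℝ) ≤ k)]
  · rw [weight_of_le_one (by omega), one_rpow, mul_one]
    rcases le_or_gt (l + k) 0 with hlk | hlk
    · rw [fwdDiff_iter_eq_zero h0 hlk, abs_zero]
      exact hA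
    · obtain ⟨k₁, hk₁⟩ : ∃ k₁ : ℕ, (k₁ : ℤ) = 1 - l := ⟨(1 - l).toNat, by omega⟩
      have := h k₁ (k - k₁) (by omega) 1 le_rfl
      rw [dminus_iterate_apply, dplus_eq_fwdDiff, ← Function.iterate_add_apply] at this
      simp only [Nat.cast_one, one_rpow, mul_one] at this
      convert this using 4 <;> omega

theorem stmt4 (μ : ℝ) (N : ℕ) (A : ℝ) (hA : 0 < A) :
    ∃ C > 0, ∀ a : ℤ → ℝ,
      (∀ l : ℤ, l ≤ 0 → a l = 0) →
      (∀ l : ℕ, 1 ≤ l → |a (l : ℤ)| ≤ A * (l : ℝ) ^ μ) →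
      (∀ k₁ k₂ : ℕ, k₁ + k₂ ≤ 2 * N → ∀ l : ℕ, 1 ≤ l →
        |(dminus^[k₁] (dplus^[k₂] a)) (l : ℤ)| ≤ A * (l : ℝ) ^ (μ - 2 * ((k₁ : ℝ) + k₂))) →
      ∀ l : ℕ, 1 ≤ l → |(Pop^[N] a) (l : ℤ)| ≤ C * (l : ℝ) ^ (μ - 2 * (N : ℝ)) := by
  have hfamily : UniformSymbolBound (-1) μ (2 * N)
      (Subtype.val : {a // SymbolBound (-1) μ (2 * N) A a} → ℤ → ℝ) :=
    ⟨A, hA.le, fun a => a.2⟩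
  obtain ⟨C, hC, hbound⟩ := hfamily.iterate_pop (K := 0) N
  refine ⟨C + 1, by positivity, fun a h0 _ h l hl => ?_⟩
  have := hbound ⟨a, symbolBound_of_abs_dminus_dplus_le hA.le h0 h⟩ 0 le_rfl l (by omega)
  rw [Function.iterate_zero_apply, weight_natCast hl, Nat.cast_zero, sub_zero] at this
  exact this.trans (by gcongr; linarith)
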